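/- arXiv:1208.1118 — 2 statements merged into one kernel-verified Lean document; each statement's English description precedes it below -/
import Mathlib

section
/- Let k be an algebraically closed field, fix integers n ≥ 3 and 1 ≤ b ≤ n−1, and let l, m be positive integers with m ≤ l+1. Let L_1, …, L_m be pairwise distinct b-dimensional linear subspaces of P^n_k all containing a common (b−1)-dimensional linear subspace, with homogeneous ideals I_1, …, I_m in S = k[x_0,…,x_n]. Then dim_k (S/(I_1 ∩ ⋯ ∩ I_m))_l ≥ A_b(l,m); equivalently, the space of degree-l forms vanishing on L_1 ∪ ⋯ ∪ L_m has codimension at least A_b(l,m) in k[x_0,…,x_n]_l. -/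
open MvPolynomial

noncomputable section ModuliOfSingularHypersurfaces

/-! ### Basic framework: Zariski topology on spaces of forms, ideals as subschemes. -/

/-- A point of affine space (a coordinate function) determines a prime ideal of the
polynomial ring, namely the kernel of the evaluation map.  This realizes affine space
inside the prime spectrum. -/
def coordPt {k : Type*} [Field k] {σ : Type*} (c : σ → k) :
    PrimeSpectrum (MvPolynomial σ k) :=
  ⟨RingHom.ker (MvPolynomial.aeval c).toRingHom, RingHom.ker_isPrime _⟩

/-- The Zariski topology on a space of multivariate polynomials (viewed as the affine
space of coefficients), induced from the prime spectrum of the ring of polynomial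
functions on the coefficients. -/
def coeffTopology (k : Type*) [Field k] (N : ℕ) :
    TopologicalSpace (MvPolynomial (Fin N) k) :=
  TopologicalSpace.induced
    (fun F => coordPt (fun s : (Fin N →₀ ℕ) => MvPolynomial.coeff s F)) inferInstance

/-- The Zariski topology on a submodule of the space of polynomials. -/
def submodTop {k : Type*} [Field k] {N : ℕ} (W : Submodule k (MvPolynomial (Fin N) k)) :
    TopologicalSpace W :=
  (coeffTopology k N).induced Subtype.val

/-- The Zariski topology on the projectivization of a space of polynomials (the quotient
topology from the punctured cone). -/
def projTop {k : Type*} [Field k] {N : ℕ} (W : Submodule k (MvPolynomial (Fin N) k)) :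
    TopologicalSpace (Projectivization k W) :=
  TopologicalSpace.coinduced
    (fun v : {w : W // w ≠ 0} => Projectivization.mk k v.1 v.2)
    ((submodTop W).induced Subtype.val)

/-- The Zariski topology on affine space `k^N`. -/
def affTop (k : Type*) [Field k] (N : ℕ) : TopologicalSpace (Fin N → k) :=
  TopologicalSpace.induced (fun p => coordPt p) inferInstance

/-- The Zariski topology on the projective space of lines in `k^N`. -/
def projSpaceTop (k : Type*) [Field k] (N : ℕ) :
    TopologicalSpace (Projectivization k (Fin N → k)) :=
  TopologicalSpace.coinduced
    (fun v : {w : Fin N → k // w ≠ 0} => Projectivization.mk k v.1 v.2)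
    ((affTop k N).induced Subtype.val)

/-- The dimension of a subset of a topological space (Krull dimension of the subspace). -/
def sdim {X : Type*} (t : TopologicalSpace X) (S : Set X) : WithBot ℕ∞ :=
  @topologicalKrullDim S (t.induced Subtype.val)

/-- `C` is an irreducible component of `S`, i.e. a maximal irreducible subset of `S`. -/
def IsIrredComponentOf {X : Type*} (t : TopologicalSpace X) (S C : Set X) : Prop :=
  C ⊆ S ∧ @IsIrreducible X t C ∧
    ∀ C' : Set X, C' ⊆ S → @IsIrreducible X t C' → C ⊆ C' → C' = C

/-- A homogeneous ideal: one generated by homogeneous elements. -/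
def IsHomogIdeal {k : Type*} [CommRing k] {N : ℕ} (I : Ideal (MvPolynomial (Fin N) k)) :
    Prop :=
  ∃ s : Set (MvPolynomial (Fin N) k),
    (∀ g ∈ s, ∃ d, MvPolynomial.IsHomogeneous g d) ∧ I = Ideal.span s

/-- The ideal of the singular locus `V(F, ∂F/∂x_0, …, ∂F/∂x_n)` of the hypersurface
`V(F)`. -/
def singIdeal {k : Type*} [CommRing k] {n : ℕ} (F : MvPolynomial (Fin (n + 1)) k) :
    Ideal (MvPolynomial (Fin (n + 1)) k) :=
  Ideal.span (insert F (Set.range fun i => MvPolynomial.pderiv i F))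

/-- The dimension (over `k`) of the degree-`l` graded piece of `S/I`. -/
def gradedPieceRank {k : Type*} [Field k] {N : ℕ} (I : Ideal (MvPolynomial (Fin N) k))
    (l : ℕ) : ℕ :=
  Module.finrank k
    ((MvPolynomial.homogeneousSubmodule (Fin N) k l).map
      (Ideal.Quotient.mkₐ k I).toLinearMap)

/-- The homogeneous ideal `I` (defining a closed subscheme of projective space) has
Hilbert polynomial `h`:  for all large `m`, `dim_k (S/I)_m = h(m)`. -/
def HasHilbertPoly {k : Type*} [Field k] {N : ℕ} (I : Ideal (MvPolynomial (Fin N) k))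
    (h : Polynomial ℚ) : Prop :=
  ∀ᶠ m in Filter.atTop, ((gradedPieceRank I m : ℚ)) = h.eval (m : ℚ)

/-- The closed subscheme defined by `I` has dimension `b` and degree `d`: its Hilbert
polynomial is `(d/b!) z^b + (lower order terms)`. -/
def HasDimDeg {k : Type*} [Field k] {N : ℕ} (I : Ideal (MvPolynomial (Fin N) k))
    (b d : ℕ) : Prop :=
  ∃ h : Polynomial ℚ, h.natDegree = b ∧
    h.leadingCoeff = (d : ℚ) / (Nat.factorial b : ℚ) ∧ HasHilbertPoly I h

/-- `I` defines an integral closed subscheme of projective space: it is a relevant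
homogeneous prime ideal. -/
def IsIntegralSubscheme {k : Type*} [Field k] {N : ℕ}
    (I : Ideal (MvPolynomial (Fin N) k)) : Prop :=
  IsHomogIdeal I ∧ I.IsPrime ∧ ∃ i, MvPolynomial.X i ∉ I

/-- The singular locus of `V(F)` has dimension at least `b`:  some relevant homogeneous
prime containing the ideal of the singular locus has quotient of Krull dimension at
least `b + 1` (projective dimension at least `b`). -/
def SingDimGE {k : Type*} [Field k] {n : ℕ} (b : ℕ)
    (F : MvPolynomial (Fin (n + 1)) k) : Prop :=
  ∃ P : Ideal (MvPolynomial (Fin (n + 1)) k),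
    IsHomogIdeal P ∧ P.IsPrime ∧ (∃ i, MvPolynomial.X i ∉ P) ∧
    singIdeal F ≤ P ∧
    ((b : WithBot ℕ∞) + 1) ≤ ringKrullDim (MvPolynomial (Fin (n + 1)) k ⧸ P)

/-- The moduli space `X` of degree-`l` hypersurfaces in `ℙⁿ` whose singular locus has
dimension at least `b`, as a subset of `ℙ(k[x_0,…,x_n]_l)`. -/
def Xset (k : Type*) [Field k] (n b l : ℕ) :
    Set (Projectivization k (MvPolynomial.homogeneousSubmodule (Fin (n + 1)) k l)) :=
  {x | ∃ (F : MvPolynomial.homogeneousSubmodule (Fin (n + 1)) k l) (hF : F ≠ 0),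
    x = Projectivization.mk k F hF ∧ SingDimGE b (F : MvPolynomial (Fin (n + 1)) k)}

/-- The locus `X¹` of degree-`l` hypersurfaces singular along some `b`-dimensional
linear subspace `L ⊆ ℙⁿ` (given by `n - b` independent linear forms). -/
def X1set (k : Type*) [Field k] (n b l : ℕ) :
    Set (Projectivization k (MvPolynomial.homogeneousSubmodule (Fin (n + 1)) k l)) :=
  {x | ∃ (F : MvPolynomial.homogeneousSubmodule (Fin (n + 1)) k l) (hF : F ≠ 0),
    x = Projectivization.mk k F hF ∧
    ∃ ℓ : Fin (n - b) → MvPolynomial (Fin (n + 1)) k,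
      (∀ i, MvPolynomial.IsHomogeneous (ℓ i) 1) ∧ LinearIndependent k ℓ ∧
      singIdeal (F : MvPolynomial (Fin (n + 1)) k) ≤ Ideal.span (Set.range ℓ)}

/-- The locus `T^d` of degree-`l` hypersurfaces whose singular locus contains a closed
subscheme whose Hilbert polynomial is the Hilbert polynomial of some integral
`b`-dimensional closed subscheme of `ℙⁿ` of degree `d`. -/
def Tdset (k : Type*) [Field k] (n b l d : ℕ) :
    Set (Projectivization k (MvPolynomial.homogeneousSubmodule (Fin (n + 1)) k l)) :=
  {x | ∃ (F : MvPolynomial.homogeneousSubmodule (Fin (n + 1)) k l) (hF : F ≠ 0),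
    x = Projectivization.mk k F hF ∧
    ∃ J : Ideal (MvPolynomial (Fin (n + 1)) k), IsHomogIdeal J ∧
      singIdeal (F : MvPolynomial (Fin (n + 1)) k) ≤ J ∧
      ∃ (P : Ideal (MvPolynomial (Fin (n + 1)) k)) (h : Polynomial ℚ),
        IsIntegralSubscheme P ∧ h.natDegree = b ∧
        h.leadingCoeff = (d : ℚ) / (Nat.factorial b : ℚ) ∧
        HasHilbertPoly P h ∧ HasHilbertPoly J h}

/-- `A_b(l,m) = Σ_{e=1}^{m} C(l−e+1+b, b)`. -/
def Abound (b l m : ℕ) : ℕ :=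
  ∑ e ∈ Finset.Icc 1 m, Nat.choose (l + 1 - e + b) b

/-- Homogenization of a polynomial in `x_0, …, x_{n-1}` to a homogeneous polynomial of
degree `m` in `x_0, …, x_n`, with respect to the last variable `x_n`. -/
def homogenizeTo {R : Type*} [CommRing R] {n : ℕ} (m : ℕ)
    (f : MvPolynomial (Fin n) R) : MvPolynomial (Fin (n + 1)) R :=
  ∑ d ∈ Finset.range (m + 1),
    (MvPolynomial.rename Fin.castSucc (MvPolynomial.homogeneousComponent d f)) *
      (MvPolynomial.X (Fin.last n)) ^ (m - d)

/-- The differential of `g` at the point `p`, as a linear functional. -/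
def dirDerivAt {k : Type*} [Field k] {N : ℕ} (p : Fin N → k)
    (g : MvPolynomial (Fin N) k) : (Fin N → k) →ₗ[k] k :=
  ∑ i, MvPolynomial.eval p (MvPolynomial.pderiv i g) • LinearMap.proj i

/-- The tangent space at `p` of the affine cone on the closed subscheme defined by the
homogeneous ideal `J` (the Zariski tangent space of the projective subscheme at the
point `[p]` has dimension one less). -/
def coneTangent {k : Type*} [Field k] {N : ℕ} (J : Ideal (MvPolynomial (Fin N) k))
    (p : Fin N → k) : Submodule k (Fin N → k) :=
  ⨅ g ∈ J, LinearMap.ker (dirDerivAt p g)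

end ModuliOfSingularHypersurfaces

/-! Order the planes and let `K_e` be the degree-`l` forms vanishing on `L_1, …, L_e`, so that
`K_m` is the kernel of `S_l → (S/(I_1 ∩ ⋯ ∩ I_m))_l`. Each step costs at least `C(l-e+b, b)`
dimensions. Restriction to `L_{e+1} ≅ ℙ^b` is, in suitable coordinates, a ring map `Φ` onto
`k[y_0, …, y_b]` killing `I_{e+1}`. Since the planes are distinct and of the same dimension,
each `I_j` with `j ≤ e` contains a linear form `f_j ∉ I_{e+1}`, so `P = ∏ f_j` has `Φ P ≠ 0`.
Then `P · S_{l-e} ⊆ K_e` and `Φ` maps it onto `Φ P · k[y]_{l-e}`, of dimension `C(l-e+b, b)`,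
while `K_{e+1} = K_e ∩ I_{e+1}` lies in the kernel of `Φ`. -/

open Module Finset

namespace Submodule

variable {K V W : Type*} [DivisionRing K] [AddCommGroup V] [Module K V] [AddCommGroup W]
  [Module K W]

theorem finrank_map_add_finrank_inf_ker (p : Submodule K V) [FiniteDimensional K p]
    (f : V →ₗ[K] W) :
    finrank K (p.map f) + finrank K ↥(p ⊓ LinearMap.ker f) = finrank K p := by
  have h := LinearMap.finrank_range_add_finrank_ker (f.domRestrict p)
  rw [LinearMap.range_domRestrict, LinearMap.ker_domRestrict] at h
  rw [← h, ← (comapSubtypeEquivOfLe (inf_le_left : p ⊓ LinearMap.ker f ≤ p)).finrank_eq,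
    comap_inf, comap_subtype_self, top_inf_eq]

theorem finrank_map_add_finrank_inf_le (p q : Submodule K V) [FiniteDimensional K p]
    {f : V →ₗ[K] W} (hq : q ≤ LinearMap.ker f) :
    finrank K (p.map f) + finrank K ↥(p ⊓ q) ≤ finrank K p := by
  have : FiniteDimensional K ↥(p ⊓ LinearMap.ker f) := finiteDimensional_of_le inf_le_left
  rw [← p.finrank_map_add_finrank_inf_ker f]
  gcongr
  exact finrank_mono (inf_le_inf_left p hq)

theorem exists_mem_notMem_of_ne_of_finrank_eq {p q : Submodule K V} [FiniteDimensional K q]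
    (hne : p ≠ q) (h : finrank K p = finrank K q) : ∃ x ∈ p, x ∉ q :=
  SetLike.not_le_iff_exists.mp fun hle ↦ hne (eq_of_le_of_finrank_eq hle h)

end Submodule

namespace MvPolynomial

section CommSemiring

variable {R σ ι : Type*} [CommSemiring R]

instance [Finite σ] (d : ℕ) : Module.Finite R (homogeneousSubmodule σ R d) :=
  Module.Finite.iff_fg.mpr (homogeneousSubmodule_fg σ R d)

theorem homogeneousSubmodule_le_map_of_le_map_one
    (Φ : MvPolynomial σ R →ₐ[R] MvPolynomial ι R)
    (h : homogeneousSubmodule ι R 1 ≤ (homogeneousSubmodule σ R 1).map Φ.toLinearMap)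
    (d : ℕ) :
    homogeneousSubmodule ι R d ≤ (homogeneousSubmodule σ R d).map Φ.toLinearMap := by
  rw [← homogeneousSubmodule_one_pow (σ := ι) (R := R) d,
    ← homogeneousSubmodule_one_pow (σ := σ) (R := R) d,
    Submodule.map_pow]
  exact pow_le_pow_left' h d

end CommSemiring

variable {σ k : Type*} [Field k]

theorem finrank_homogeneousSubmodule [Fintype σ] (d : ℕ) :
    finrank k (homogeneousSubmodule σ k d) = (Fintype.card σ + d - 1).choose d := by
  classical
  have hdeg : {a : σ →₀ ℕ | a.degree = d} =
      ((univ : Finset σ).finsuppAntidiag d : Set (σ →₀ ℕ)) := by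
    ext a
    simp [mem_finsuppAntidiag, Finsupp.degree_eq_sum]
  rw [homogeneousSubmodule_eq_finsupp_supported, hdeg,
    (AddMonoidAlgebra.supportedEquivFinsupp _).finrank_eq, finrank_finsupp_self]
  simp [card_finsuppAntidiag_nat_eq_choose]

variable (σ k) in
noncomputable def linearFormsBasis : Basis σ k (homogeneousSubmodule σ k 1) :=
  (Basis.span (linearIndependent_X σ k)).map
    (LinearEquiv.ofEq _ _ homogeneousSubmodule_one_eq_span_X.symm)

@[simp]
theorem linearFormsBasis_apply (i : σ) : (linearFormsBasis σ k i : MvPolynomial σ k) = X i := by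
  simp [linearFormsBasis, Basis.span_apply]

/-- `Φ` is restriction to the linear subspace `V(E)`, written in coordinates on it. -/
theorem exists_algHom_ker_linearForms [Fintype σ] (E : Submodule k (MvPolynomial σ k))
    (hE : E ≤ homogeneousSubmodule σ k 1) {r : ℕ} (hr : finrank k E + r = Fintype.card σ) :
    ∃ Φ : MvPolynomial σ k →ₐ[k] MvPolynomial (Fin r) k,
      (∀ f ∈ homogeneousSubmodule σ k 1, Φ f = 0 ↔ f ∈ E) ∧
      homogeneousSubmodule (Fin r) k 1 ≤ (homogeneousSubmodule σ k 1).map Φ.toLinearMap := by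
  set U := homogeneousSubmodule σ k 1
  set E' := E.comap U.subtype
  have hQ : finrank k (U ⧸ E') = r := by
    have := E'.finrank_quotient_add_finrank
    rw [(Submodule.comapSubtypeEquivOfLe hE).finrank_eq, finrank_eq_card_basis
      (linearFormsBasis σ k)] at this
    omega
  set C := Module.finBasisOfFinrankEq k (U ⧸ E') hQ
  set L : U →ₗ[k] MvPolynomial (Fin r) k :=
    Finsupp.linearCombination k X ∘ₗ C.repr.toLinearMap ∘ₗ E'.mkQ
  set Φ : MvPolynomial σ k →ₐ[k] MvPolynomial (Fin r) k :=
    aeval fun i ↦ L (linearFormsBasis σ k i)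
  have hΦL : Φ.toLinearMap ∘ₗ U.subtype = L :=
    (linearFormsBasis σ k).ext fun i ↦ by simp [Φ]
  have hΦ : ∀ u : U, Φ u = L u := fun u ↦ LinearMap.congr_fun hΦL u
  refine ⟨Φ, fun f hf ↦ ?_, ?_⟩
  · rw [show f = (⟨f, hf⟩ : U) from rfl, hΦ]
    simp only [L, LinearMap.comp_apply, LinearEquiv.coe_coe]
    rw [map_eq_zero_iff _ (linearIndependent_X (Fin r) k), LinearEquiv.map_eq_zero_iff,
      Submodule.mkQ_apply, Submodule.Quotient.mk_eq_zero]
    rfl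
  · rw [homogeneousSubmodule_one_eq_span_X, Submodule.span_le]
    rintro _ ⟨q, rfl⟩
    obtain ⟨u, hu⟩ := E'.mkQ_surjective (C q)
    refine ⟨u, u.2, ?_⟩
    simp [hΦ, L, hu]

theorem choose_add_finrank_inf_span_le [Fintype σ] {E : Submodule k (MvPolynomial σ k)}
    (hE : E ≤ homogeneousSubmodule σ k 1) {b : ℕ}
    (hdim : finrank k E + (b + 1) = Fintype.card σ) (A : Submodule k (MvPolynomial σ k))
    [FiniteDimensional k A] {ι : Type*} (T : Finset ι) (f : ι → MvPolynomial σ k)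
    (hf : ∀ j ∈ T, f j ∈ homogeneousSubmodule σ k 1 ∧ f j ∉ E) {d : ℕ}
    (hA : ∀ g ∈ homogeneousSubmodule σ k d, (∏ j ∈ T, f j) * g ∈ A) :
    (d + b).choose b +
        finrank k ↥(A ⊓ (Ideal.span (E : Set (MvPolynomial σ k))).restrictScalars k)
      ≤ finrank k A := by
  obtain ⟨Φ, hΦE, hΦsurj⟩ := exists_algHom_ker_linearForms E hE hdim
  have hker : (Ideal.span (E : Set (MvPolynomial σ k))).restrictScalars k ≤
      LinearMap.ker Φ.toLinearMap := by
    intro x hx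
    refine (Ideal.span_le (I := RingHom.ker Φ)).mpr (fun y hy ↦ ?_) hx
    exact (hΦE y (hE hy)).mpr hy
  have hP : Φ (∏ j ∈ T, f j) ≠ 0 := by
    rw [map_prod, prod_ne_zero_iff]
    exact fun j hj ↦ mt (hΦE _ (hf j hj).1).mp (hf j hj).2
  have hmul : (homogeneousSubmodule (Fin (b + 1)) k d).map
      (LinearMap.mulLeft k (Φ (∏ j ∈ T, f j))) ≤ A.map Φ.toLinearMap := by
    rintro _ ⟨_, hz, rfl⟩
    obtain ⟨g, hg, rfl⟩ := homogeneousSubmodule_le_map_of_le_map_one Φ hΦsurj d hz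
    exact ⟨_, hA g hg, by simp⟩
  calc (d + b).choose b + finrank k ↥(A ⊓ (Ideal.span (E : Set _)).restrictScalars k)
      = finrank k ((homogeneousSubmodule (Fin (b + 1)) k d).map
          (LinearMap.mulLeft k (Φ (∏ j ∈ T, f j)))) +
        finrank k ↥(A ⊓ (Ideal.span (E : Set _)).restrictScalars k) := by
        rw [← (Submodule.equivMapOfInjective _ (mul_right_injective₀ hP) _).finrank_eq,
          finrank_homogeneousSubmodule, Fintype.card_fin,
          show b + 1 + d - 1 = d + b by omega, Nat.choose_symm_add]
    _ ≤ finrank k (A.map Φ.toLinearMap) +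
        finrank k ↥(A ⊓ (Ideal.span (E : Set _)).restrictScalars k) := by
        gcongr; exact Submodule.finrank_mono hmul
    _ ≤ finrank k A := Submodule.finrank_map_add_finrank_inf_le _ _ hker

end MvPolynomial

open MvPolynomial

theorem Abound_succ (b l e : ℕ) : Abound b l (e + 1) = Abound b l e + (l - e + b).choose b := by
  rw [Abound, Abound, sum_Icc_succ_top (by omega), show l + 1 - (e + 1) = l - e by omega]

theorem finrank_inf_iInf_span_add_Abound_le {σ k : Type*} [Field k] [Fintype σ] {ι : Type*}
    [DecidableEq ι] (E : ι → Submodule k (MvPolynomial σ k))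
    (hE : ∀ j, E j ≤ homogeneousSubmodule σ k 1) {b : ℕ}
    (hdim : ∀ j, finrank k (E j) + (b + 1) = Fintype.card σ) (hinj : Function.Injective E)
    {l : ℕ} (T : Finset ι) (hT : #T ≤ l + 1) :
    finrank k ↥(homogeneousSubmodule σ k l ⊓
        ⨅ j ∈ T, (Ideal.span (E j : Set (MvPolynomial σ k))).restrictScalars k) + Abound b l #T
      ≤ finrank k (homogeneousSubmodule σ k l) := by
  induction T using Finset.induction_on with
  | empty => simpa [Abound] using Submodule.finrank_mono inf_le_left
  | @insert a T ha ih =>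
    have := Submodule.finiteDimensional_of_le (hE a)
    have hexists : ∀ j, ∃ f, j ≠ a → f ∈ E j ∧ f ∉ E a := fun j ↦ by
      by_cases hj : j = a
      · exact ⟨0, (absurd hj ·)⟩
      obtain ⟨f, hfj, hfa⟩ := Submodule.exists_mem_notMem_of_ne_of_finrank_eq (hinj.ne hj)
        (by have := hdim j; have := hdim a; omega)
      exact ⟨f, fun _ ↦ ⟨hfj, hfa⟩⟩
    choose f hf using hexists
    have hTa : ∀ j ∈ T, j ≠ a := fun j hj h ↦ ha (h ▸ hj)
    have hcard : #T ≤ l := by rw [card_insert_of_notMem ha] at hT; omega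
    have hstep := choose_add_finrank_inf_span_le (hE a) (hdim a)
      (homogeneousSubmodule σ k l ⊓
        ⨅ j ∈ T, (Ideal.span (E j : Set (MvPolynomial σ k))).restrictScalars k) T f
      (fun j hj ↦ ⟨hE j (hf j (hTa j hj)).1, (hf j (hTa j hj)).2⟩) (d := l - #T) ?_
    · rw [card_insert_of_notMem ha, Abound_succ]
      have hK : ⨅ j ∈ insert a T, (Ideal.span (E j : Set (MvPolynomial σ k))).restrictScalars k
          = (⨅ j ∈ T, (Ideal.span (E j : Set (MvPolynomial σ k))).restrictScalars k) ⊓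
            (Ideal.span (E a : Set (MvPolynomial σ k))).restrictScalars k := by
        rw [Finset.iInf_insert, inf_comm]
      rw [hK, ← inf_assoc]
      have := ih (by omega)
      omega
    · intro g hg
      simp only [Submodule.mem_inf, Submodule.mem_iInf]
      refine ⟨?_, fun j hj ↦ ?_⟩
      · have hprod := IsHomogeneous.prod T f (fun _ ↦ 1) fun j hj ↦ hE j (hf j (hTa j hj)).1
        simpa [Nat.add_sub_cancel' hcard] using hprod.mul hg
      · exact Ideal.mul_mem_right _ _ (Ideal.mem_of_dvd _ (dvd_prod_of_mem f hj)
          (Ideal.subset_span (hf j (hTa j hj)).1))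

theorem statement_3_general (k : Type*) [Field k] (n b l m : ℕ)
    (hb2 : b ≤ n - 1)
    (hml : m ≤ l + 1)
    (lin : Fin m → (Fin (n - b) → MvPolynomial (Fin (n + 1)) k))
    (hlinhom : ∀ j i, MvPolynomial.IsHomogeneous (lin j i) 1)
    (hlinind : ∀ j, LinearIndependent k (lin j))
    (I : Fin m → Ideal (MvPolynomial (Fin (n + 1)) k))
    (hI : ∀ j, I j = Ideal.span (Set.range (lin j)))
    (hdist : Function.Injective I) :
    Abound b l m ≤ gradedPieceRank (⨅ j, I j) l := by
  set E : Fin m → Submodule k (MvPolynomial (Fin (n + 1)) k) :=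
    fun j ↦ Submodule.span k (Set.range (lin j))
  have hIE : ∀ j, I j = Ideal.span (E j : Set (MvPolynomial (Fin (n + 1)) k)) := fun j ↦ by
    rw [hI]
    exact (Submodule.span_span_of_tower k _ (Set.range (lin j))).symm
  have hE : ∀ j, E j ≤ homogeneousSubmodule (Fin (n + 1)) k 1 := fun j ↦
    Submodule.span_le.mpr (Set.range_subset_iff.mpr (hlinhom j))
  have hdim : ∀ j, finrank k (E j) + (b + 1) = Fintype.card (Fin (n + 1)) := fun j ↦ by
    rw [finrank_span_eq_card (hlinind j), Fintype.card_fin, Fintype.card_fin]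
    omega
  have hinj : Function.Injective E := fun i j h ↦ hdist (by rw [hIE, hIE, h])
  have hbound := finrank_inf_iInf_span_add_Abound_le E hE hdim hinj univ (l := l)
    (by simpa using hml)
  have hker : LinearMap.ker (Ideal.Quotient.mkₐ k (⨅ j, I j)).toLinearMap =
      ⨅ j ∈ univ, (Ideal.span (E j : Set (MvPolynomial (Fin (n + 1)) k))).restrictScalars k := by
    ext x
    simp [hIE, Ideal.Quotient.eq_zero_iff_mem]
  have hrank := (homogeneousSubmodule (Fin (n + 1)) k l).finrank_map_add_finrank_inf_ker
    (Ideal.Quotient.mkₐ k (⨅ j, I j)).toLinearMap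
  rw [hker] at hrank
  rw [card_univ, Fintype.card_fin] at hbound
  unfold gradedPieceRank
  omega

/-- Let `k` be algebraically closed, `n ≥ 3`, `1 ≤ b ≤ n−1`, and
`l, m` positive with `m ≤ l+1`.  Let `L_1, …, L_m` be pairwise distinct `b`-dimensional
linear subspaces of `ℙⁿ_k` (each cut out by `n−b` linearly independent linear forms),
all containing a common `(b−1)`-dimensional linear subspace, with homogeneous ideals
`I_1, …, I_m`.  Then `dim_k (S/(I_1 ∩ ⋯ ∩ I_m))_l ≥ A_b(l,m)`, i.e. the degree-`l`
forms vanishing on `L_1 ∪ ⋯ ∪ L_m` have codimension at least `A_b(l,m)`. -/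
theorem statement_3 (k : Type*) [Field k] [IsAlgClosed k] (n b l m : ℕ)
    (hn : 3 ≤ n) (hb1 : 1 ≤ b) (hb2 : b ≤ n - 1) (hl : 0 < l) (hm : 0 < m)
    (hml : m ≤ l + 1)
    (lin : Fin m → (Fin (n - b) → MvPolynomial (Fin (n + 1)) k))
    (hlinhom : ∀ j i, MvPolynomial.IsHomogeneous (lin j i) 1)
    (hlinind : ∀ j, LinearIndependent k (lin j))
    (I : Fin m → Ideal (MvPolynomial (Fin (n + 1)) k))
    (hI : ∀ j, I j = Ideal.span (Set.range (lin j)))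
    (hdist : Function.Injective I)
    (common : Fin (n - b + 1) → MvPolynomial (Fin (n + 1)) k)
    (hchom : ∀ i, MvPolynomial.IsHomogeneous (common i) 1)
    (hcind : LinearIndependent k common)
    (hcontain : ∀ j, I j ≤ Ideal.span (Set.range common)) :
    Abound b l m ≤ gradedPieceRank (⨅ j, I j) l :=
  statement_3_general k n b l m hb2 hml lin hlinhom hlinind I hI hdist
end

section
/- Fix an integer n ≥ 3, a prime p, a power q of p, and a positive integer l, and set τ = ⌊(l−1)/p⌋. Let Z ⊂ P^n over the algebraic closure of F_p be an integral closed subscheme not contained in the hyperplane V(x_n), and let F_0 ∈ F_q[x_0,…,x_{n−1}]_{≤ l−1} be a fixed polynomial. Then the number of G ∈ F_q[x_0,…,x_{n−1}]_{≤ τ} such that Z ⊆ V((F_0 + G^p)^∼) (homogenization to degree l−1) is at most the number of G ∈ F_q[x_0,…,x_{n−1}]_{≤ τ} such that Z ⊆ V(G^∼) (homogenization to degree τ). -/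
open MvPolynomial

/-! If `F₀ + G^p` and `F₀ + G₀^p` both vanish on `Z`, so does their difference
`(G - G₀)^p`, whose homogenization to degree `l - 1 = pτ + r` is `((G - G₀)^∼)^p · x_n^r`.
As `Z` is integral and not contained in `V(x_n)`, `Z ⊆ V((G - G₀)^∼)`; hence `G ↦ G - G₀`
injects the first set into the second. -/

open MvPolynomial

section Homogenize

variable {R : Type*} [CommRing R] {n : ℕ}

lemma homogenizeTo_add (m : ℕ) (f g : MvPolynomial (Fin n) R) :
    homogenizeTo m (f + g) = homogenizeTo m f + homogenizeTo m g := by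
  simp only [homogenizeTo, map_add, add_mul, Finset.sum_add_distrib]

lemma homogenizeTo_sub (m : ℕ) (f g : MvPolynomial (Fin n) R) :
    homogenizeTo m (f - g) = homogenizeTo m f - homogenizeTo m g := by
  simp only [homogenizeTo, map_sub, sub_mul, Finset.sum_sub_distrib]

lemma homogenizeTo_sum (m : ℕ) {ι : Type*} (s : Finset ι) (f : ι → MvPolynomial (Fin n) R) :
    homogenizeTo m (∑ i ∈ s, f i) = ∑ i ∈ s, homogenizeTo m (f i) :=
  map_sum (AddMonoidHom.mk' (homogenizeTo m) (homogenizeTo_add m)) f s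

lemma homogenizeTo_of_isHomogeneous {h : MvPolynomial (Fin n) R} {e m : ℕ}
    (hh : h.IsHomogeneous e) (hem : e ≤ m) :
    homogenizeTo m h = rename Fin.castSucc h * X (Fin.last n) ^ (m - e) := by
  have hmem : h ∈ homogeneousSubmodule (Fin n) R e := (mem_homogeneousSubmodule _ _).mpr hh
  rw [homogenizeTo, Finset.sum_eq_single e]
  · rw [homogeneousComponent_of_mem hmem, if_pos rfl]
  · intro d _ hne
    rw [homogeneousComponent_of_mem hmem, if_neg hne, map_zero, zero_mul]
  · intro he
    exact absurd (Finset.mem_range.mpr (Nat.lt_succ_of_le hem)) he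

lemma sum_homogeneousComponent_range_of_totalDegree_le {σ : Type*}
    {H : MvPolynomial σ R} {τ : ℕ} (hH : H.totalDegree ≤ τ) :
    ∑ d ∈ Finset.range (τ + 1), homogeneousComponent d H = H := by
  conv_rhs => rw [← sum_homogeneousComponent H]
  refine (Finset.sum_subset (Finset.range_subset_range.mpr (by omega)) ?_).symm
  intro d _ hd
  exact homogeneousComponent_eq_zero d H (by simp only [Finset.mem_range] at hd; omega)

lemma homogenizeTo_pow_char (p : ℕ) [Fact p.Prime] [CharP R p] {H : MvPolynomial (Fin n) R}
    {τ : ℕ} (hH : H.totalDegree ≤ τ) (r : ℕ) :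
    homogenizeTo (p * τ + r) (H ^ p) = homogenizeTo τ H ^ p * X (Fin.last n) ^ r := by
  conv_lhs => rw [← sum_homogeneousComponent_range_of_totalDegree_le hH, sum_pow_char,
    homogenizeTo_sum]
  rw [homogenizeTo, sum_pow_char, Finset.sum_mul]
  refine Finset.sum_congr rfl fun d hd => ?_
  have hdτ : d ≤ τ := Nat.lt_succ_iff.mp (Finset.mem_range.mp hd)
  have hdp : d * p ≤ τ * p := Nat.mul_le_mul_right _ hdτ
  rw [homogenizeTo_of_isHomogeneous ((homogeneousComponent_isHomogeneous d H).pow p)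
      (by rw [mul_comm p τ]; omega),
    mul_pow, ← pow_mul, Nat.sub_mul, map_pow, mul_assoc, ← pow_add, mul_comm p τ,
    Nat.sub_add_comm hdp]

lemma map_homogenizeTo_mem_of_pow_char (p : ℕ) [Fact p.Prime] [CharP R p]
    {S : Type*} [CommRing S] (φ : R →+* S) {I : Ideal (MvPolynomial (Fin (n + 1)) S)}
    [I.IsPrime] (hX : X (Fin.last n) ∉ I) {H : MvPolynomial (Fin n) R} {τ : ℕ}
    (hH : H.totalDegree ≤ τ) (r : ℕ) (hmem : map φ (homogenizeTo (p * τ + r) (H ^ p)) ∈ I) :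
    map φ (homogenizeTo τ H) ∈ I := by
  rw [homogenizeTo_pow_char p hH r, map_mul, map_pow, map_pow, map_X] at hmem
  exact (Ideal.IsPrime.mem_of_pow_mem ‹_› _ <|
    (Ideal.IsPrime.mem_or_mem ‹_› hmem).resolve_right fun h =>
      hX (Ideal.IsPrime.mem_of_pow_mem ‹_› _ h))

end Homogenize

lemma finite_totalDegree_le {R σ : Type*} [CommRing R] [Finite R] [Finite σ] (m : ℕ) :
    {G : MvPolynomial σ R | G.totalDegree ≤ m}.Finite := by
  have : Finite (restrictTotalDegree σ R m) := Module.finite_of_finite R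
  exact (restrictTotalDegree σ R m : Set (MvPolynomial σ R)).toFinite.subset
    fun G hG => (mem_restrictTotalDegree σ m G).mpr hG

lemma Nat.card_le_card_of_sub_mem {A : Type*} [AddGroup A] {P Q : A → Prop}
    (hQ : {a | Q a}.Finite) (hPQ : ∀ a b, P a → P b → Q (a - b)) :
    Nat.card {a // P a} ≤ Nat.card {a // Q a} := by
  rcases isEmpty_or_nonempty {a // P a} with hP | ⟨b, hb⟩
  · simp
  have : Finite {a // Q a} := hQ
  exact Nat.card_le_card_of_injective (fun a => ⟨a.1 - b, hPQ a b a.2 hb⟩)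
    fun a a' h => Subtype.ext (sub_left_inj.mp (congrArg Subtype.val h))

theorem statement_8_general (p : ℕ) [Fact p.Prime] (Fq : Type*) [Field Fq] [Fintype Fq]
    [Algebra Fq (AlgebraicClosure (ZMod p))] (n l τ : ℕ)
    (hτ : τ = (l - 1) / p)
    (I : Ideal (MvPolynomial (Fin (n + 1)) (AlgebraicClosure (ZMod p))))
    (hint : IsIntegralSubscheme I)
    (hnot : MvPolynomial.X (Fin.last n) ∉ I)
    (F₀ : MvPolynomial (Fin n) Fq) :
    Nat.card {G : MvPolynomial (Fin n) Fq // G.totalDegree ≤ τ ∧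
        MvPolynomial.map (algebraMap Fq (AlgebraicClosure (ZMod p)))
          (homogenizeTo (l - 1) (F₀ + G ^ p)) ∈ I} ≤
    Nat.card {G : MvPolynomial (Fin n) Fq // G.totalDegree ≤ τ ∧
        MvPolynomial.map (algebraMap Fq (AlgebraicClosure (ZMod p)))
          (homogenizeTo τ G) ∈ I} := by
  have : I.IsPrime := hint.2.1
  have : CharP Fq p := RingHom.charP _ (algebraMap Fq (AlgebraicClosure (ZMod p))).injective p
  obtain ⟨r, hr⟩ : ∃ r, l - 1 = p * τ + r :=
    Nat.exists_eq_add_of_le (hτ ▸ Nat.mul_div_le (l - 1) p)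
  refine Nat.card_le_card_of_sub_mem ((finite_totalDegree_le τ).subset fun G hG => hG.1)
    fun G G' ⟨hG, hGI⟩ ⟨hG', hG'I⟩ => ?_
  have hdeg : (G - G').totalDegree ≤ τ := (totalDegree_sub G G').trans (max_le hG hG')
  have hdiff := I.sub_mem hGI hG'I
  rw [← map_sub, ← homogenizeTo_sub, add_sub_add_left_eq_sub, ← sub_pow_char, hr] at hdiff
  exact ⟨hdeg, map_homogenizeTo_mem_of_pow_char p _ hnot hdeg r hdiff⟩

/-- Fix `n ≥ 3`, a prime `p`, a finite field `F_q` of characteristic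
`p`, a positive integer `l`, and set `τ = ⌊(l−1)/p⌋`.  Let `Z ⊆ ℙⁿ` over the algebraic
closure of `F_p` be an integral closed subscheme not contained in the hyperplane
`V(x_n)`, and let `F₀ ∈ F_q[x_0,…,x_{n−1}]_{≤ l−1}` be fixed.  Then the number of
`G ∈ F_q[x_0,…,x_{n−1}]_{≤ τ}` with `Z ⊆ V((F₀ + G^p)^∼)` (homogenization to degree
`l − 1`) is at most the number of `G ∈ F_q[x_0,…,x_{n−1}]_{≤ τ}` with `Z ⊆ V(G^∼)`
(homogenization to degree `τ`). -/
theorem statement_8 (p : ℕ) [Fact p.Prime] (Fq : Type*) [Field Fq] [Fintype Fq]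
    [Algebra Fq (AlgebraicClosure (ZMod p))] (n l τ : ℕ)
    (hn : 3 ≤ n) (hl : 0 < l) (hτ : τ = (l - 1) / p)
    (I : Ideal (MvPolynomial (Fin (n + 1)) (AlgebraicClosure (ZMod p))))
    (hint : IsIntegralSubscheme I)
    (hnot : MvPolynomial.X (Fin.last n) ∉ I)
    (F₀ : MvPolynomial (Fin n) Fq) (hF₀ : F₀.totalDegree ≤ l - 1) :
    Nat.card {G : MvPolynomial (Fin n) Fq // G.totalDegree ≤ τ ∧
        MvPolynomial.map (algebraMap Fq (AlgebraicClosure (ZMod p)))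
          (homogenizeTo (l - 1) (F₀ + G ^ p)) ∈ I} ≤
    Nat.card {G : MvPolynomial (Fin n) Fq // G.totalDegree ≤ τ ∧
        MvPolynomial.map (algebraMap Fq (AlgebraicClosure (ZMod p)))
          (homogenizeTo τ G) ∈ I} :=
  statement_8_general p Fq n l τ hτ I hint hnot F₀
end
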